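/- arXiv:0904.2426 — 2 statements merged into one kernel-verified Lean document; each statement's English description precedes it below -/
import Mathlib

section
/- Let F₁ and F₂ be probability distribution functions of positive random variables and suppose sup_{x>0} |F₁(x) − F₂(x)| < ε. Then for every integer i ≥ 1 and any α > 0, |∫₀^∞ e^{-αx} (αx)^i / i! dF₁(x) − ∫₀^∞ e^{-αx} (αx)^i / i! dF₂(x)| < 2ε. -/
/-!
Integrating by parts (Fubini on the region `t < x`), a distribution function `F` concentrated on
`(a, ∞)` satisfies `∫_{(a,∞)} g dF = g a + ∫_a^∞ g'(t) (1 - F t) dt` for every differentiable `g`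
with integrable derivative. Hence the difference of the two integrals is `∫_0^∞ g' (F₂ - F₁)`,
which is at most `sup |F₁ - F₂|` times the total variation `∫_0^∞ |g'|`. The Poisson weight `g`
rises on `[0, i/α]` and then decreases to `0`, so its total variation is
`2 g(i/α) - g 0 ≤ 2`.
-/

open MeasureTheory Filter Set Topology

theorem setIntegral_Ioi_eq_add_integral_deriv_mul_measureReal_Ioi (μ : Measure ℝ)
    [IsFiniteMeasure μ] {g : ℝ → ℝ} {a : ℝ} (hg : Differentiable ℝ g)
    (hg' : IntegrableOn (deriv g) (Ioi a)) :
    ∫ x in Ioi a, g x ∂μ = g a * μ.real (Ioi a) + ∫ t in Ioi a, deriv g t * μ.real (Ioi t) := by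
  set K : ℝ → ℝ → ℝ := fun t x => if t < x then deriv g t else 0
  have hK : Integrable (Function.uncurry K)
      ((volume.restrict (Ioi a)).prod (μ.restrict (Ioi a))) := by
    refine (hg'.norm.mul_prod (integrable_const (1 : ℝ))).mono' ?_ (.of_forall fun p => ?_)
    · exact (Measurable.ite (measurableSet_lt measurable_fst measurable_snd)
        ((measurable_deriv g).comp measurable_fst) measurable_const).aestronglyMeasurable
    · simp only [Function.uncurry, K]
      split_ifs <;> simp
  have h_inner_t : ∀ x ∈ Ioi a, ∫ t in Ioi a, K t x = g x - g a := fun x hx => by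
    have : (fun t => K t x) = (Iio x).indicator (deriv g) := by ext t; simp [K, indicator_apply]
    rw [this, setIntegral_indicator measurableSet_Iio, Ioi_inter_Iio,
      ← integral_Ioc_eq_integral_Ioo, ← intervalIntegral.integral_of_le hx.le]
    exact intervalIntegral.integral_eq_sub_of_hasDerivAt (fun t _ => (hg t).hasDerivAt)
      ((intervalIntegrable_iff_integrableOn_Ioc_of_le hx.le).2 (hg'.mono_set Ioc_subset_Ioi_self))
  have h_inner_x : ∀ t ∈ Ioi a, ∫ x in Ioi a, K t x ∂μ = deriv g t * μ.real (Ioi t) :=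
      fun t ht => by
    have : (fun x => K t x) = (Ioi t).indicator (fun _ => deriv g t) := by
      ext x; simp [K, indicator_apply]
    rw [this, setIntegral_indicator measurableSet_Ioi, setIntegral_const, smul_eq_mul, mul_comm,
      inter_eq_right.2 (Ioi_subset_Ioi ht.le)]
  have h_outer : Integrable (fun x => ∫ t in Ioi a, K t x) (μ.restrict (Ioi a)) :=
    hK.integral_prod_right
  calc ∫ x in Ioi a, g x ∂μ = ∫ x in Ioi a, (g a + ∫ t in Ioi a, K t x) ∂μ :=
        setIntegral_congr_fun measurableSet_Ioi fun x hx => by rw [h_inner_t x hx]; ring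
    _ = g a * μ.real (Ioi a) + ∫ x in Ioi a, (∫ t in Ioi a, K t x) ∂μ := by
        rw [integral_add (integrable_const _) h_outer, setIntegral_const, smul_eq_mul, mul_comm]
    _ = g a * μ.real (Ioi a) + ∫ t in Ioi a, deriv g t * μ.real (Ioi t) := by
        rw [← integral_integral_swap hK, setIntegral_congr_fun measurableSet_Ioi h_inner_x]

section Unimodal

variable {g : ℝ → ℝ} {a m L : ℝ} (hg : Differentiable ℝ g) (ham : a ≤ m)
  (hinc : ∀ t ∈ Ioc a m, 0 ≤ deriv g t) (hdec : ∀ t ∈ Ioi m, deriv g t ≤ 0)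
  (hL : Tendsto g atTop (𝓝 L))
include hg ham hinc hdec hL

theorem integrableOn_deriv_Ioi_of_unimodal : IntegrableOn (deriv g) (Ioi a) := by
  rw [← Ioc_union_Ioi_eq_Ioi ham]
  exact (intervalIntegral.integrableOn_deriv_of_nonneg hg.continuous.continuousOn
    (fun t _ => (hg t).hasDerivAt) fun t ht => hinc t (Ioo_subset_Ioc_self ht)).union
    (integrableOn_Ioi_deriv_of_nonpos' (fun t _ => (hg t).hasDerivAt) hdec hL)

theorem integral_abs_deriv_Ioi_of_unimodal :
    ∫ t in Ioi a, |deriv g t| = 2 * g m - g a - L := by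
  have hint := integrableOn_deriv_Ioi_of_unimodal hg ham hinc hdec hL
  have h_rise : ∫ t in Ioc a m, |deriv g t| = g m - g a := by
    rw [setIntegral_congr_fun measurableSet_Ioc fun t ht => abs_of_nonneg (hinc t ht),
      ← intervalIntegral.integral_of_le ham]
    exact intervalIntegral.integral_eq_sub_of_hasDerivAt (fun t _ => (hg t).hasDerivAt)
      ((intervalIntegrable_iff_integrableOn_Ioc_of_le ham).2 (hint.mono_set Ioc_subset_Ioi_self))
  have h_fall : ∫ t in Ioi m, |deriv g t| = g m - L := by
    rw [setIntegral_congr_fun measurableSet_Ioi fun t ht => abs_of_nonpos (hdec t ht),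
      integral_neg, integral_Ioi_of_hasDerivAt_of_nonpos' (fun t _ => (hg t).hasDerivAt) hdec hL]
    ring
  rw [← Ioc_union_Ioi_eq_Ioi ham, setIntegral_union Ioc_disjoint_Ioi_same measurableSet_Ioi
    (hint.mono_set Ioc_subset_Ioi_self).abs (hint.mono_set (Ioi_subset_Ioi ham)).abs,
    h_rise, h_fall]
  ring

end Unimodal

theorem abs_setIntegral_mul_le_of_abs_le {X : Type*} [MeasurableSpace X] {μ : Measure X}
    {s : Set X} {f h : X → ℝ} {C : ℝ} (hs : MeasurableSet s) (hf : IntegrableOn f s μ)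
    (hh : ∀ x ∈ s, |h x| ≤ C) :
    |∫ x in s, f x * h x ∂μ| ≤ (∫ x in s, |f x| ∂μ) * C := by
  rw [← integral_mul_const, ← Real.norm_eq_abs]
  refine norm_integral_le_of_norm_le (hf.abs.mul_const C) (ae_restrict_of_forall_mem hs ?_)
  intro x hx
  rw [Real.norm_eq_abs, abs_mul]
  exact mul_le_mul_of_nonneg_left (hh x hx) (abs_nonneg _)

namespace StieltjesFunction

section Distribution

variable (F : StieltjesFunction ℝ) {a : ℝ} (hF0 : ∀ x ≤ a, F x = 0)
  (hF1 : Tendsto F atTop (𝓝 1))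
include hF0 hF1

theorem mem_Icc_zero_one (x : ℝ) : F x ∈ Icc 0 1 :=
  ⟨F.mono.le_of_tendsto (tendsto_atBot_of_eventually_const hF0) x, F.mono.ge_of_tendsto hF1 x⟩

theorem setIntegral_Ioi_eq_add_integral_deriv_mul_one_sub {g : ℝ → ℝ}
    (hg : Differentiable ℝ g) (hg' : IntegrableOn (deriv g) (Ioi a)) :
    ∫ x in Ioi a, g x ∂F.measure = g a + ∫ t in Ioi a, deriv g t * (1 - F t) := by
  have := F.isProbabilityMeasure (tendsto_atBot_of_eventually_const hF0) hF1
  have hF_Ioi : ∀ t, F.measure.real (Ioi t) = 1 - F t := fun t => by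
    rw [measureReal_def, F.measure_Ioi hF1,
      ENNReal.toReal_ofReal (sub_nonneg.2 (F.mem_Icc_zero_one hF0 hF1 t).2)]
  simp_rw [setIntegral_Ioi_eq_add_integral_deriv_mul_measureReal_Ioi F.measure hg hg', hF_Ioi,
    hF0 a le_rfl, sub_zero, mul_one]

theorem integrableOn_mul_one_sub {f : ℝ → ℝ} (hf : IntegrableOn f (Ioi a)) :
    IntegrableOn (fun t => f t * (1 - F t)) (Ioi a) := by
  refine hf.mul_bdd (c := 1) (measurable_const.sub F.mono.measurable).aestronglyMeasurable
    (.of_forall fun t => ?_)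
  obtain ⟨h0, h1⟩ := F.mem_Icc_zero_one hF0 hF1 t
  rw [Real.norm_eq_abs, abs_le]
  constructor <;> linarith

end Distribution

theorem setIntegral_Ioi_sub_setIntegral_Ioi (F₁ F₂ : StieltjesFunction ℝ) {a : ℝ}
    (hF₁0 : ∀ x ≤ a, F₁ x = 0) (hF₂0 : ∀ x ≤ a, F₂ x = 0)
    (hF₁1 : Tendsto F₁ atTop (𝓝 1)) (hF₂1 : Tendsto F₂ atTop (𝓝 1)) {g : ℝ → ℝ}
    (hg : Differentiable ℝ g) (hg' : IntegrableOn (deriv g) (Ioi a)) :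
    ∫ x in Ioi a, g x ∂F₁.measure - ∫ x in Ioi a, g x ∂F₂.measure
      = ∫ t in Ioi a, deriv g t * (F₂ t - F₁ t) := by
  rw [F₁.setIntegral_Ioi_eq_add_integral_deriv_mul_one_sub hF₁0 hF₁1 hg hg',
    F₂.setIntegral_Ioi_eq_add_integral_deriv_mul_one_sub hF₂0 hF₂1 hg hg',
    add_sub_add_left_eq_sub, ← integral_sub (F₁.integrableOn_mul_one_sub hF₁0 hF₁1 hg')
      (F₂.integrableOn_mul_one_sub hF₂0 hF₂1 hg')]
  congr 1
  ext t
  ring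

end StieltjesFunction

noncomputable def poissonWeight (α : ℝ) (i : ℕ) (x : ℝ) : ℝ :=
  Real.exp (-α * x) * (α * x) ^ i / (Nat.factorial i)

section PoissonWeight

variable {α : ℝ} (i : ℕ)

theorem differentiable_poissonWeight : Differentiable ℝ (poissonWeight α i) := by
  unfold poissonWeight
  fun_prop

theorem mul_deriv_poissonWeight (x : ℝ) :
    x * deriv (poissonWeight α i) x = (i - α * x) * poissonWeight α i x := by
  have h : HasDerivAt (poissonWeight α i) _ x :=
    (((hasDerivAt_id' x).const_mul (-α)).exp.mul
      (((hasDerivAt_id' x).const_mul α).pow i)).div_const (Nat.factorial i : ℝ)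
  rw [h.deriv, poissonWeight]
  cases i <;> simp [pow_succ] <;> ring

theorem poissonWeight_nonneg (hα : 0 ≤ α) {x : ℝ} (hx : 0 ≤ x) : 0 ≤ poissonWeight α i x := by
  unfold poissonWeight
  positivity

theorem poissonWeight_le_one (hα : 0 ≤ α) {x : ℝ} (hx : 0 ≤ x) : poissonWeight α i x ≤ 1 := by
  have hαx : 0 ≤ α * x := mul_nonneg hα hx
  calc poissonWeight α i x = (α * x) ^ i / (Nat.factorial i) * Real.exp (-(α * x)) := by
        unfold poissonWeight; ring_nf
    _ ≤ Real.exp (α * x) * Real.exp (-(α * x)) := by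
        gcongr; exact Real.pow_div_factorial_le_exp _ hαx i
    _ = 1 := by rw [← Real.exp_add, add_neg_cancel, Real.exp_zero]

theorem tendsto_poissonWeight_atTop (hα : 0 < α) :
    Tendsto (poissonWeight α i) atTop (𝓝 0) := by
  have h := ((Real.tendsto_pow_mul_exp_neg_atTop_nhds_zero i).comp
    (tendsto_id.const_mul_atTop hα)).div_const (Nat.factorial i : ℝ)
  rw [zero_div] at h
  refine h.congr fun x => ?_
  simp only [Function.comp, id, poissonWeight, neg_mul]
  ring

theorem deriv_poissonWeight_nonneg (hα : 0 < α) {x : ℝ} (hx : x ∈ Ioc 0 (i / α)) :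
    0 ≤ deriv (poissonWeight α i) x := by
  have hαx : α * x ≤ i := (le_div_iff₀' hα).1 hx.2
  refine nonneg_of_mul_nonneg_right ?_ hx.1
  rw [mul_deriv_poissonWeight]
  exact mul_nonneg (sub_nonneg.2 hαx) (poissonWeight_nonneg i hα.le hx.1.le)

theorem deriv_poissonWeight_nonpos (hα : 0 < α) {x : ℝ} (hx : x ∈ Ioi (i / α)) :
    deriv (poissonWeight α i) x ≤ 0 := by
  have hαx : (i : ℝ) < α * x := (div_lt_iff₀' hα).1 hx
  have hx0 : 0 < x := (div_nonneg i.cast_nonneg hα.le).trans_lt hx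
  refine nonpos_of_mul_nonpos_right ?_ hx0
  rw [mul_deriv_poissonWeight]
  exact mul_nonpos_of_nonpos_of_nonneg (sub_nonpos.2 hαx.le)
    (poissonWeight_nonneg i hα.le hx0.le)

theorem integrableOn_deriv_poissonWeight (hα : 0 < α) :
    IntegrableOn (deriv (poissonWeight α i)) (Ioi 0) :=
  integrableOn_deriv_Ioi_of_unimodal (differentiable_poissonWeight i) (by positivity)
    (fun _ => deriv_poissonWeight_nonneg i hα) (fun _ => deriv_poissonWeight_nonpos i hα)
    (tendsto_poissonWeight_atTop i hα)

theorem integral_abs_deriv_poissonWeight_le_two (hα : 0 < α) :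
    ∫ t in Ioi 0, |deriv (poissonWeight α i) t| ≤ 2 := by
  have hm : 0 ≤ i / α := by positivity
  rw [integral_abs_deriv_Ioi_of_unimodal (differentiable_poissonWeight i) hm
    (fun _ => deriv_poissonWeight_nonneg i hα) (fun _ => deriv_poissonWeight_nonpos i hα)
    (tendsto_poissonWeight_atTop i hα)]
  linarith [poissonWeight_le_one i hα.le hm, poissonWeight_nonneg i hα.le le_rfl]

end PoissonWeight

theorem stmt_2_general (F₁ F₂ : StieltjesFunction ℝ)
    (hF₁0 : ∀ x ≤ (0 : ℝ), F₁ x = 0) (hF₂0 : ∀ x ≤ (0 : ℝ), F₂ x = 0)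
    (hF₁1 : Tendsto F₁ atTop (nhds 1)) (hF₂1 : Tendsto F₂ atTop (nhds 1))
    (ε : ℝ)
    (hsup : (⨆ x : Ioi (0 : ℝ), |F₁ x - F₂ x|) < ε)
    (α : ℝ) (hα : 0 < α) (i : ℕ) :
    |(∫ x in Ioi (0 : ℝ), Real.exp (-α * x) * (α * x) ^ i / (Nat.factorial i) ∂F₁.measure)
      - ∫ x in Ioi (0 : ℝ), Real.exp (-α * x) * (α * x) ^ i / (Nat.factorial i) ∂F₂.measure|
      < 2 * ε := by
  set S := ⨆ x : Ioi (0 : ℝ), |F₁ x - F₂ x|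
  have hbdd : BddAbove (range fun x : Ioi (0 : ℝ) => |F₁ x - F₂ x|) :=
    ⟨1, forall_mem_range.2 fun x =>
      have h₁ := F₁.mem_Icc_zero_one hF₁0 hF₁1 x
      have h₂ := F₂.mem_Icc_zero_one hF₂0 hF₂1 x
      abs_sub_le_of_nonneg_of_le h₁.1 h₁.2 h₂.1 h₂.2⟩
  have hS : ∀ x ∈ Ioi (0 : ℝ), |F₂ x - F₁ x| ≤ S := fun x hx => by
    rw [abs_sub_comm]
    exact le_ciSup hbdd ⟨x, hx⟩
  have hg' := integrableOn_deriv_poissonWeight i hα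
  change |∫ x in Ioi 0, poissonWeight α i x ∂F₁.measure
    - ∫ x in Ioi 0, poissonWeight α i x ∂F₂.measure| < 2 * ε
  rw [StieltjesFunction.setIntegral_Ioi_sub_setIntegral_Ioi F₁ F₂ hF₁0 hF₂0 hF₁1 hF₂1
    (differentiable_poissonWeight i) hg']
  calc _ ≤ (∫ t in Ioi 0, |deriv (poissonWeight α i) t|) * S :=
        abs_setIntegral_mul_le_of_abs_le measurableSet_Ioi hg' hS
    _ ≤ 2 * S := by
        gcongr
        · exact Real.iSup_nonneg fun _ => abs_nonneg _
        · exact integral_abs_deriv_poissonWeight_le_two i hα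
    _ < 2 * ε := by linarith

theorem stmt_2 (F₁ F₂ : StieltjesFunction ℝ)
    (hF₁0 : ∀ x ≤ (0 : ℝ), F₁ x = 0) (hF₂0 : ∀ x ≤ (0 : ℝ), F₂ x = 0)
    (hF₁1 : Tendsto F₁ atTop (nhds 1)) (hF₂1 : Tendsto F₂ atTop (nhds 1))
    (ε : ℝ) (hε : 0 < ε)
    (hsup : (⨆ x : Ioi (0 : ℝ), |F₁ x - F₂ x|) < ε)
    (α : ℝ) (hα : 0 < α) (i : ℕ) (hi : 1 ≤ i) :
    |(∫ x in Ioi (0 : ℝ), Real.exp (-α * x) * (α * x) ^ i / (Nat.factorial i) ∂F₁.measure)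
      - ∫ x in Ioi (0 : ℝ), Real.exp (-α * x) * (α * x) ^ i / (Nat.factorial i) ∂F₂.measure|
      < 2 * ε :=
  stmt_2_general F₁ F₂ hF₁0 hF₂0 hF₁1 hF₂1 ε hsup α hα i
end

section
/- For any z ≥ 0, ∫₀^z (1 − e^{-2(z−x)²}) · 4x e^{-2x²} dx = 1 − e^{-2z²} − √π · z · e^{-z²} · (2Φ(√2 z) − 1), where Φ is the standard normal CDF. -/
open MeasureTheory Set

/-- The standard normal cumulative distribution function. -/
noncomputable def stdNormalCDF (t : ℝ) : ℝ :=
  (Real.sqrt (2 * Real.pi))⁻¹ * ∫ y in Iic t, Real.exp (-y ^ 2 / 2)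

open Real intervalIntegral

lemma integrable_exp_neg_sq_div_two : Integrable (fun y : ℝ => exp (-y ^ 2 / 2)) := by
  convert integrable_exp_neg_mul_sq (show (0 : ℝ) < 1 / 2 by norm_num) using 2 with y
  ring_nf

lemma integral_exp_neg_sq_div_two : ∫ y : ℝ, exp (-y ^ 2 / 2) = sqrt (2 * π) := by
  rw [show (2 * π) = π / (1 / 2) by ring, ← integral_gaussian]
  congr with y
  ring_nf

lemma stdNormalCDF_add_stdNormalCDF_neg (t : ℝ) : stdNormalCDF t + stdNormalCDF (-t) = 1 := by
  have hreflect : ∫ y in Iic (-t), exp (-y ^ 2 / 2) = ∫ y in Ioi t, exp (-y ^ 2 / 2) := by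
    rw [← integral_comp_neg_Ioi]
    simp only [neg_sq]
  have hsplit := integral_Iic_add_Ioi (b := t) integrable_exp_neg_sq_div_two.integrableOn
    integrable_exp_neg_sq_div_two.integrableOn
  rw [integral_exp_neg_sq_div_two] at hsplit
  rw [stdNormalCDF, stdNormalCDF, ← mul_add, hreflect, hsplit]
  exact inv_mul_cancel₀ (by positivity)

lemma hasDerivAt_stdNormalCDF (t : ℝ) :
    HasDerivAt stdNormalCDF ((sqrt (2 * π))⁻¹ * exp (-t ^ 2 / 2)) t := by
  have hIic : (fun u => ∫ y in Iic u, exp (-y ^ 2 / 2))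
      = fun u => (∫ y in Iic t, exp (-y ^ 2 / 2)) + ∫ y in t..u, exp (-y ^ 2 / 2) := by
    funext u
    rw [← integral_Iic_sub_Iic integrable_exp_neg_sq_div_two.integrableOn
      integrable_exp_neg_sq_div_two.integrableOn]
    ring
  have hG : HasDerivAt (fun u => ∫ y in Iic u, exp (-y ^ 2 / 2)) (exp (-t ^ 2 / 2)) t := by
    rw [hIic]
    exact (integral_hasDerivAt_right integrable_exp_neg_sq_div_two.intervalIntegrable
      (Continuous.stronglyMeasurableAtFilter (by fun_prop) _ _) (by fun_prop)).const_add _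
  exact hG.const_mul _

lemma integral_four_mul_exp_neg_two_mul_sq (a b : ℝ) :
    ∫ x in a..b, 4 * x * exp (-2 * x ^ 2) = exp (-2 * a ^ 2) - exp (-2 * b ^ 2) := by
  have hderiv (x : ℝ) : HasDerivAt (fun x => -exp (-2 * x ^ 2)) (4 * x * exp (-2 * x ^ 2)) x :=
    (((hasDerivAt_pow 2 x).const_mul (-2 : ℝ)).exp.neg).congr_deriv (by ring)
  rw [integral_eq_sub_of_hasDerivAt (fun x _ => hderiv x)
    (Continuous.intervalIntegrable (by fun_prop) _ _)]
  ring

/- Completing the square, `-2(z-x)² - 2x² = -4(x - z/2)² - z²`, so the integrand is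
`4(x - z/2) e^{-4(x-z/2)²-z²}`, which has an elementary primitive, plus a multiple of the
Gaussian density at `2√2 (x - z/2)`. -/
lemma hasDerivAt_primitive_exp_mul_four_mul_exp (z x : ℝ) :
    HasDerivAt (fun x => -(1 / 2) * exp (-4 * (x - z / 2) ^ 2 - z ^ 2)
        + sqrt π * z * exp (-z ^ 2) * stdNormalCDF (2 * sqrt 2 * (x - z / 2)))
      (exp (-2 * (z - x) ^ 2) * (4 * x * exp (-2 * x ^ 2))) x := by
  have hquad : HasDerivAt (fun x : ℝ => -4 * (x - z / 2) ^ 2 - z ^ 2) (-8 * (x - z / 2)) x :=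
    ((((hasDerivAt_id x).sub_const (z / 2)).pow 2).const_mul (-4 : ℝ)).sub_const (z ^ 2)
      |>.congr_deriv (by simp only [id_eq]; ring)
  have hlin : HasDerivAt (fun x : ℝ => 2 * sqrt 2 * (x - z / 2)) (2 * sqrt 2) x := by
    simpa using ((hasDerivAt_id x).sub_const (z / 2)).const_mul (2 * sqrt 2)
  have hΦ := (hasDerivAt_stdNormalCDF _).comp x hlin
  refine ((hquad.exp.const_mul (-(1 / 2))).add (hΦ.const_mul (sqrt π * z * exp (-z ^ 2))))
    |>.congr_deriv ?_
  have hsq2 : sqrt 2 ^ 2 = 2 := sq_sqrt (by norm_num)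
  have hsqrt : sqrt (2 * π) = sqrt 2 * sqrt π := sqrt_mul (by norm_num) _
  have hgauss : -(2 * sqrt 2 * (x - z / 2)) ^ 2 / 2 = -4 * (x - z / 2) ^ 2 := by
    rw [mul_pow, mul_pow, hsq2]; ring
  have hexp : exp (-2 * (z - x) ^ 2) * exp (-2 * x ^ 2) = exp (-4 * (x - z / 2) ^ 2 - z ^ 2) := by
    rw [← exp_add]; congr 1; ring
  have hexp' : exp (-z ^ 2) * exp (-4 * (x - z / 2) ^ 2) = exp (-4 * (x - z / 2) ^ 2 - z ^ 2) := by
    rw [← exp_add]; congr 1; ring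
  have hcoeff : sqrt π * z * exp (-z ^ 2)
      * ((sqrt (2 * π))⁻¹ * exp (-(2 * sqrt 2 * (x - z / 2)) ^ 2 / 2) * (2 * sqrt 2))
      = 2 * z * exp (-4 * (x - z / 2) ^ 2 - z ^ 2) := by
    rw [hgauss, hsqrt, ← hexp']
    field_simp
  rw [hcoeff]
  linear_combination (-(4 * x)) * hexp

lemma integral_exp_mul_four_mul_exp (z : ℝ) :
    ∫ x in (0 : ℝ)..z, exp (-2 * (z - x) ^ 2) * (4 * x * exp (-2 * x ^ 2))
      = sqrt π * z * exp (-z ^ 2) * (2 * stdNormalCDF (sqrt 2 * z) - 1) := by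
  rw [integral_eq_sub_of_hasDerivAt (fun x _ => hasDerivAt_primitive_exp_mul_four_mul_exp z x)
    (Continuous.intervalIntegrable (by fun_prop) _ _)]
  have hΦ := stdNormalCDF_add_stdNormalCDF_neg (sqrt 2 * z)
  rw [show 2 * sqrt 2 * (z - z / 2) = sqrt 2 * z by ring,
    show 2 * sqrt 2 * (0 - z / 2) = -(sqrt 2 * z) by ring,
    show -4 * (z - z / 2) ^ 2 - z ^ 2 = -4 * (0 - z / 2) ^ 2 - z ^ 2 by ring]
  linear_combination (-(sqrt π * z * exp (-z ^ 2))) * hΦ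

theorem stmt_7_general (z : ℝ) :
    ∫ x in (0 : ℝ)..z, (1 - Real.exp (-2 * (z - x) ^ 2)) * (4 * x * Real.exp (-2 * x ^ 2))
      = 1 - Real.exp (-2 * z ^ 2)
        - Real.sqrt Real.pi * z * Real.exp (-z ^ 2) * (2 * stdNormalCDF (Real.sqrt 2 * z) - 1) := by
  simp_rw [sub_mul, one_mul]
  rw [integral_sub (Continuous.intervalIntegrable (by fun_prop) _ _)
      (Continuous.intervalIntegrable (by fun_prop) _ _),
    integral_four_mul_exp_neg_two_mul_sq, integral_exp_mul_four_mul_exp]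
  simp

theorem stmt_7 (z : ℝ) (hz : 0 ≤ z) :
    ∫ x in (0 : ℝ)..z, (1 - Real.exp (-2 * (z - x) ^ 2)) * (4 * x * Real.exp (-2 * x ^ 2))
      = 1 - Real.exp (-2 * z ^ 2)
        - Real.sqrt Real.pi * z * Real.exp (-z ^ 2) * (2 * stdNormalCDF (Real.sqrt 2 * z) - 1) :=
  stmt_7_general z
end
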